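/- Let F be a finite field of order Q and let C be a Reed–Solomon code of length n, dimension k, rate R = k/n. Fix ε > 0 and let ℓ = ⌈Q/(2εn√R)⌉. If Q is sufficiently large (relative to ε and R), then for every z ∈ F^n and every set L of ℓ+1 distinct codewords, the average relative Hamming distance (1/(ℓ+1))·Σ_{c∈L} δ(c,z) exceeds 1 − √R − ε, i.e., C is (1−√R−ε, ℓ)-average-radius list-decodable. -/

import Mathlib

open Finset

/-- Evaluation of the polynomial with coefficient vector `c` (degree `< k`) at `x`. -/
def evalc {F : Type*} [CommSemiring F] {k : ℕ} (c : Fin k → F) (x : F) : F :=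
  ∑ i : Fin k, c i * x ^ (i : ℕ)

/-- Relative Hamming distance between two words of length `n`. -/
noncomputable def relHamming {F : Type*} [DecidableEq F] {n : ℕ} (x y : Fin n → F) : ℝ :=
  ((Finset.univ.filter (fun i : Fin n => x i ≠ y i)).card : ℝ) / n

/-!
Johnson bound. Let `a_f` be the number of positions where the codeword `f` agrees
with `z` and `S = ∑_{f ∈ L} a_f`. Distinct codewords come from distinct polynomials of degree
`< k`, so they agree in fewer than `k` positions; counting triples `(f, g, i)` with `f` and `g`
both agreeing with `z` at `i`, and applying Cauchy–Schwarz, gives `S² ≤ n (S + M (M - 1) k)`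
for `M = |L|`. Since `n ≤ Q`, the list size satisfies `2 ε √R M > 1`, and with `k = R n` this
forces `S < (√R + ε) n M`, i.e. the average distance `1 - S / (n M)` exceeds `1 - √R - ε`.
The argument works for every field size, so `Q₀ = 0`.
-/

open Polynomial

section Agreement

variable {R : Type*} [CommRing R] {k : ℕ}

theorem evalc_eq_eval_degreeLTEquiv_symm (c : Fin k → R) (x : R) :
    evalc c x = ((degreeLTEquiv R k).symm c : R[X]).eval x := by
  rw [eval_eq_sum_degreeLTEquiv (Subtype.property _), Subtype.coe_eta,
    LinearEquiv.apply_symm_apply, evalc]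

theorem card_filter_evalc_eq_lt [IsDomain R] [DecidableEq R] {ι : Type*} [Fintype ι]
    {v : ι → R} (hv : Function.Injective v) {f g : Fin k → R} (hfg : f ≠ g) :
    #{i | evalc f (v i) = evalc g (v i)} < k := by
  by_contra! hk
  have hdeg (c : Fin k → R) : ((degreeLTEquiv R k).symm c : R[X]).degree <
      #{i | evalc f (v i) = evalc g (v i)} :=
    (mem_degreeLT.mp (Subtype.property _)).trans_le (by exact_mod_cast hk)
  refine hfg <| (degreeLTEquiv R k).symm.injective <| Subtype.ext <|
    eq_of_degrees_lt_of_eval_index_eq _ hv.injOn (hdeg f) (hdeg g) fun i hi => ?_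
  simpa only [← evalc_eq_eval_degreeLTEquiv_symm] using (mem_filter.mp hi).2

end Agreement

theorem relHamming_eq_one_sub {F : Type*} [DecidableEq F] {n : ℕ} (hn : n ≠ 0)
    (x y : Fin n → F) : relHamming x y = 1 - (#{i | x i = y i} : ℝ) / n := by
  have hsplit := card_filter_add_card_filter_not (s := univ) (fun i : Fin n => x i = y i)
  rw [card_univ, Fintype.card_fin] at hsplit
  rw [relHamming, eq_sub_iff_add_eq, ← add_div, div_eq_one_iff_eq (by exact_mod_cast hn)]
  exact_mod_cast (add_comm _ _).trans hsplit

theorem average_relHamming_eq {F β : Type*} [DecidableEq F] {n : ℕ} (hn : n ≠ 0)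
    {L : Finset β} (hL : L.Nonempty) (w : β → Fin n → F) (z : Fin n → F) :
    1 / (#L : ℝ) * ∑ f ∈ L, relHamming (w f) z
      = 1 - ((∑ f ∈ L, #{i | w f i = z i} : ℕ) : ℝ) / (n * #L) := by
  have hL' : (#L : ℝ) ≠ 0 := by exact_mod_cast hL.card_pos.ne'
  simp_rw [relHamming_eq_one_sub hn, sum_sub_distrib, ← sum_div, sum_const, nsmul_one,
    Nat.cast_sum]
  field_simp

section DoubleCounting

variable {ι β : Type*} [Fintype ι] (L : Finset β) (P : β → ι → Prop) [∀ f i, Decidable (P f i)]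

theorem sum_sq_card_filter_eq_sum_sum :
    ∑ i, #{f ∈ L | P f i} ^ 2 = ∑ f ∈ L, ∑ g ∈ L, #{i | P f i ∧ P g i} := by
  simp only [sq, card_filter, sum_mul_sum, ite_zero_mul_ite_zero, mul_one]
  rw [sum_comm]
  exact sum_congr rfl fun f _ => sum_comm

theorem sum_sq_card_filter_le [DecidableEq β] (d : ℕ)
    (hd : ∀ f ∈ L, ∀ g ∈ L, f ≠ g → #{i | P f i ∧ P g i} ≤ d) :
    ∑ i, #{f ∈ L | P f i} ^ 2 ≤ ∑ f ∈ L, #{i | P f i} + #L * (#L - 1) * d := by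
  have hrow : ∀ f ∈ L, ∑ g ∈ L, #{i | P f i ∧ P g i} ≤ #{i | P f i} + (#L - 1) * d := by
    intro f hf
    rw [← add_sum_erase _ _ hf, ← card_erase_of_mem hf, ← smul_eq_mul, ← sum_const]
    simp only [and_self]
    gcongr with g hg
    exact hd f hf g (mem_of_mem_erase hg) (ne_of_mem_erase hg).symm
  calc ∑ i, #{f ∈ L | P f i} ^ 2
      = ∑ f ∈ L, ∑ g ∈ L, #{i | P f i ∧ P g i} := sum_sq_card_filter_eq_sum_sum L P
    _ ≤ ∑ f ∈ L, (#{i | P f i} + (#L - 1) * d) := sum_le_sum hrow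
    _ = ∑ f ∈ L, #{i | P f i} + #L * (#L - 1) * d := by
      rw [sum_add_distrib, sum_const, smul_eq_mul, mul_assoc]

theorem sq_sum_card_filter_le [DecidableEq β] (d : ℕ)
    (hd : ∀ f ∈ L, ∀ g ∈ L, f ≠ g → #{i | P f i ∧ P g i} ≤ d) :
    (∑ f ∈ L, #{i | P f i}) ^ 2
      ≤ Fintype.card ι * (∑ f ∈ L, #{i | P f i} + #L * (#L - 1) * d) := by
  have hswap : ∑ f ∈ L, #{i | P f i} = ∑ i, #{f ∈ L | P f i} := by
    simp only [card_filter]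
    exact sum_comm
  calc (∑ f ∈ L, #{i | P f i}) ^ 2
      = (∑ i, #{f ∈ L | P f i}) ^ 2 := by rw [hswap]
    _ ≤ Fintype.card ι * ∑ i, #{f ∈ L | P f i} ^ 2 := sq_sum_le_card_mul_sum_sq
    _ ≤ _ := Nat.mul_le_mul_left _ (sum_sq_card_filter_le L P d hd)

end DoubleCounting

theorem johnson_agreement_lt {N M S r ε d : ℝ} (hN : 0 < N) (hM : 1 ≤ M) (hr : 0 ≤ r)
    (hS : S ≤ N * M) (hd : d ≤ r ^ 2 * N) (hsq : S ^ 2 ≤ N * (S + M * (M - 1) * d))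
    (hlist : 1 < 2 * ε * r * M) :
    S < (r + ε) * (N * M) := by
  have hε : 0 < ε := by
    by_contra! hε
    nlinarith [mul_nonneg hr (by linarith : (0 : ℝ) ≤ M)]
  refine lt_of_pow_lt_pow_left₀ 2 (by positivity) ?_
  calc S ^ 2 ≤ N * (N * M + M * (M - 1) * (r ^ 2 * N)) := by
        nlinarith [mul_le_mul_of_nonneg_left hd (by nlinarith : 0 ≤ M * (M - 1))]
    _ = N ^ 2 * M * (1 + (M - 1) * r ^ 2) := by ring
    _ < N ^ 2 * M * ((r + ε) ^ 2 * M) := by gcongr; nlinarith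
    _ = ((r + ε) * (N * M)) ^ 2 := by ring

theorem stmt15_general (ε R : ℝ) (hε : 0 < ε) (hR : 0 < R) :
    ∃ Q₀ : ℕ, ∀ (F : Type) (_ : Field F) (_ : Fintype F) (_ : DecidableEq F)
      (n k : ℕ) (_ : 0 < k) (_ : k ≤ n)
      (α : Fin n → F) (_ : Function.Injective α),
      Q₀ ≤ Fintype.card F →
      (k : ℝ) / n = R →
      ∀ (z : Fin n → F) (L : Finset (Fin k → F)),
        L.card = ⌈(Fintype.card F : ℝ) / (2 * ε * n * Real.sqrt R)⌉₊ + 1 →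
        (1 / ((L.card : ℝ))) *
            ∑ f ∈ L, relHamming (fun i => evalc f (α i)) z
          > 1 - Real.sqrt R - ε := by
  refine ⟨0, fun F _ _ _ n k hk hkn α hα _ hkR z L hL => ?_⟩
  have hn : 0 < n := hk.trans_le hkn
  have hL1 : 1 ≤ #L := hL ▸ Nat.le_add_left 1 _
  set S := ∑ f ∈ L, #{i | evalc f (α i) = z i}
  have hS : S ≤ n * #L := by
    simpa [mul_comm] using
      sum_le_card_nsmul L _ n fun f _ => (card_filter_le univ _).trans_eq (card_fin n)
  have hpair : ∀ f ∈ L, ∀ g ∈ L, f ≠ g →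
      #{i | evalc f (α i) = z i ∧ evalc g (α i) = z i} ≤ k := by
    intro f _ g _ hfg
    refine (card_le_card fun i hi => ?_).trans (card_filter_evalc_eq_lt hα hfg).le
    simp only [mem_filter, mem_univ, true_and] at hi ⊢
    exact hi.1.trans hi.2.symm
  have hsq : S ^ 2 ≤ n * (S + #L * (#L - 1) * k) := by
    simpa using sq_sum_card_filter_le L (fun f i => evalc f (α i) = z i) k hpair
  have hk_eq : (k : ℝ) = Real.sqrt R ^ 2 * n := by
    rw [Real.sq_sqrt hR.le, ← hkR, div_mul_cancel₀ _ (by positivity)]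
  have hlist : 1 < 2 * ε * Real.sqrt R * #L := by
    have hnQ : (n : ℝ) ≤ Fintype.card F := by
      exact_mod_cast (Fintype.card_fin n).symm.trans_le (Fintype.card_le_of_injective α hα)
    have hc : 0 < 2 * ε * Real.sqrt R := by positivity
    have hQ : 1 / (2 * ε * Real.sqrt R) ≤ (Fintype.card F : ℝ) / (2 * ε * n * Real.sqrt R) := by
      rw [div_le_div_iff₀ hc (by positivity)]
      nlinarith
    rw [← div_lt_iff₀' hc, hL]
    push_cast
    linarith [Nat.le_ceil ((Fintype.card F : ℝ) / (2 * ε * n * Real.sqrt R))]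
  have hlt : (S : ℝ) < (Real.sqrt R + ε) * (n * #L) :=
    johnson_agreement_lt (by positivity) (by exact_mod_cast hL1) (Real.sqrt_nonneg R) (by exact_mod_cast hS)
      hk_eq.le (by exact_mod_cast hsq) hlist
  have hLne : L.Nonempty := card_pos.mp hL1
  rw [average_relHamming_eq hn.ne' hLne]
  have hnL : (0 : ℝ) < n * #L := by exact_mod_cast Nat.mul_pos hn hL1
  linarith [(div_lt_iff₀ hnL).mpr hlt]

theorem stmt15 (ε R : ℝ) (hε : 0 < ε) (hR : 0 < R) (hR1 : R ≤ 1) :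
    ∃ Q₀ : ℕ, ∀ (F : Type) (_ : Field F) (_ : Fintype F) (_ : DecidableEq F)
      (n k : ℕ) (_ : 0 < k) (_ : k ≤ n)
      (α : Fin n → F) (_ : Function.Injective α),
      Q₀ ≤ Fintype.card F →
      (k : ℝ) / n = R →
      ∀ (z : Fin n → F) (L : Finset (Fin k → F)),
        L.card = ⌈(Fintype.card F : ℝ) / (2 * ε * n * Real.sqrt R)⌉₊ + 1 →
        (1 / ((L.card : ℝ))) *
            ∑ f ∈ L, relHamming (fun i => evalc f (α i)) z
          > 1 - Real.sqrt R - ε :=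
  stmt15_general ε R hε hR
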